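/- arXiv:2009.01996 — 2 statements merged into one kernel-verified Lean document; each statement's English description precedes it below -/
import Mathlib

section
/- Let G be a graph of size q and f a local antimagic labeling of G such that: (i) for all vertices x, y, f⁺(x) = f⁺(y) implies deg(x) = deg(y); and (ii) f⁺(x) ≠ f⁺(y) implies (q+1)(deg(x) − deg(y)) ≠ f⁺(x) − f⁺(y). Then g = q + 1 − f is also a local antimagic labeling of G with the same number of distinct induced vertex labels as f. -/
open Finset

namespace LocalAntimagic

variable {V : Type*} [Fintype V] [DecidableEq V]

/-- The induced vertex label: sum of labels of edges incident to `v`. -/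
def inducedSum (G : SimpleGraph V) [DecidableRel G.Adj] (f : Sym2 V → ℕ) (v : V) : ℕ :=
  ∑ e ∈ G.incidenceFinset v, f e

/-- `f` is a local antimagic labeling of `G`: a bijection from the edge set onto
`{1, …, q}` (`q` the number of edges) such that adjacent vertices get distinct
induced sums. -/
def IsLocalAntimagic (G : SimpleGraph V) [DecidableRel G.Adj] (f : Sym2 V → ℕ) : Prop :=
  Set.BijOn f G.edgeSet (Set.Icc 1 G.edgeFinset.card) ∧
  ∀ ⦃u v⦄, G.Adj u v → inducedSum G f u ≠ inducedSum G f v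

/-- The number of distinct induced vertex labels under `f`. -/
def colorCount (G : SimpleGraph V) [DecidableRel G.Adj] (f : Sym2 V → ℕ) : ℕ :=
  (Finset.image (inducedSum G f) Finset.univ).card

/-- The local antimagic chromatic number of `G` (`⊤` if no local antimagic
labeling exists). -/
noncomputable def chiLA (G : SimpleGraph V) [DecidableRel G.Adj] : ℕ∞ :=
  sInf {n : ℕ∞ | ∃ f : Sym2 V → ℕ, IsLocalAntimagic G f ∧ (colorCount G f : ℕ∞) = n}

/-- The circulant graph on `ℤ/nℤ` with connection set `S`. -/
def circulant (n : ℕ) [NeZero n] (S : Finset (ZMod n)) : SimpleGraph (ZMod n) where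
  Adj u v := u ≠ v ∧ (u - v ∈ S ∨ v - u ∈ S)
  symm := ⟨fun u v h => ⟨h.1.symm, h.2.symm⟩⟩
  loopless := ⟨fun v h => h.1 rfl⟩

instance (n : ℕ) [NeZero n] (S : Finset (ZMod n)) : DecidableRel (circulant n S).Adj :=
  fun u v => inferInstanceAs (Decidable (u ≠ v ∧ (u - v ∈ S ∨ v - u ∈ S)))

/-- The cycle `C_n` as a circulant graph on `ℤ/nℤ`. -/
def cycle (n : ℕ) [NeZero n] : SimpleGraph (ZMod n) := circulant n {1}

instance (n : ℕ) [NeZero n] : DecidableRel (cycle n).Adj :=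
  inferInstanceAs (DecidableRel (circulant n {1}).Adj)

/-- The graph obtained from `G` by merging vertices according to the
identification map `q` (adjacent iff distinct and some preimages are adjacent). -/
def mergeGraph {V' W : Type*} (G : SimpleGraph V') (q : V' → W) : SimpleGraph W where
  Adj a b := a ≠ b ∧ ∃ u v, q u = a ∧ q v = b ∧ G.Adj u v
  symm := by
    refine ⟨?_⟩
    rintro a b ⟨hab, u, v, hu, hv, huv⟩
    exact ⟨hab.symm, v, u, hv, hu, huv.symm⟩
  loopless := ⟨fun a h => h.1 rfl⟩

end LocalAntimagic

/-!
Since every label lies in `[1, q]`, the complementary labeling `g = q + 1 - f` is again a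
bijection onto `[1, q]`, and at every vertex `g⁺(v) + f⁺(v) = (q + 1) deg v`. Hypothesis (i) turns
`f⁺(x) = f⁺(y)` into `g⁺(x) = g⁺(y)`; hypothesis (ii) says precisely that `f⁺(x) ≠ f⁺(y)` cannot
give `g⁺(x) = g⁺(y)`. So `f⁺` and `g⁺` induce the same partition of the vertices, which yields
both local antimagicity of `g` and the equality of the numbers of labels.
-/

theorem Finset.card_image_le_card_image_of_eq_imp {α β γ : Type*} [DecidableEq β]
    [DecidableEq γ] {s : Finset α} {a : α → β} {b : α → γ}
    (h : ∀ x ∈ s, ∀ y ∈ s, a x = a y → b x = b y) : #(s.image b) ≤ #(s.image a) := by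
  calc #(s.image b) ≤ #(s.image fun x => (a x, b x)) :=
        card_le_card_of_surjOn Prod.snd <| by
          rintro _ hz
          obtain ⟨x, hx, rfl⟩ := mem_image.1 hz
          exact ⟨(a x, b x), mem_image_of_mem _ hx, rfl⟩
    _ = #((s.image fun x => (a x, b x)).image Prod.fst) := by
        refine (card_image_of_injOn ?_).symm
        simp only [Set.InjOn, coe_image, Set.mem_image, mem_coe]
        rintro _ ⟨x, hx, rfl⟩ _ ⟨y, hy, rfl⟩ hxy
        exact Prod.ext hxy (h x hx y hy hxy)
    _ = #(s.image a) := by rw [image_image]; rfl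

theorem Nat.bijOn_add_one_tsub_Icc (q : ℕ) :
    Set.BijOn (fun x => q + 1 - x) (Set.Icc 1 q) (Set.Icc 1 q) := by
  have hmaps : Set.MapsTo (fun x => q + 1 - x) (Set.Icc 1 q) (Set.Icc 1 q) := by
    intro x hx
    simp only [Set.mem_Icc] at hx ⊢
    omega
  have hinv : Set.LeftInvOn (fun x => q + 1 - x) (fun x => q + 1 - x) (Set.Icc 1 q) := by
    intro x hx
    simp only [Set.mem_Icc] at hx
    dsimp only
    omega
  exact Set.InvOn.bijOn ⟨hinv, hinv⟩ hmaps hmaps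

namespace LocalAntimagic

variable {V : Type*} [Fintype V] [DecidableEq V] {G : SimpleGraph V} [DecidableRel G.Adj]
  {f : Sym2 V → ℕ}

theorem inducedSum_tsub_add_inducedSum {c : ℕ} (hf : ∀ e ∈ G.edgeSet, f e ≤ c) (v : V) :
    inducedSum G (fun e => c - f e) v + inducedSum G f v = c * G.degree v := by
  rw [inducedSum, inducedSum, ← sum_add_distrib,
    sum_congr rfl fun e he => tsub_add_cancel_of_le
      (hf e (G.incidenceSet_subset v ((G.mem_incidenceFinset v e).1 he))),
    sum_const, G.card_incidenceFinset_eq_degree, smul_eq_mul, mul_comm]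

theorem inducedSum_tsub_eq_iff {c : ℕ} (hf : ∀ e ∈ G.edgeSet, f e ≤ c)
    (hdeg : ∀ x y : V, inducedSum G f x = inducedSum G f y → G.degree x = G.degree y)
    (hsep : ∀ x y : V, inducedSum G f x ≠ inducedSum G f y →
      (c : ℤ) * ((G.degree x : ℤ) - (G.degree y : ℤ)) ≠
        (inducedSum G f x : ℤ) - (inducedSum G f y : ℤ))
    (x y : V) :
    inducedSum G (fun e => c - f e) x = inducedSum G (fun e => c - f e) y ↔
      inducedSum G f x = inducedSum G f y := by
  have hx := inducedSum_tsub_add_inducedSum hf x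
  have hy := inducedSum_tsub_add_inducedSum hf y
  constructor
  · intro hg
    by_contra hne
    apply hsep x y hne
    have hx' : (inducedSum G (fun e => c - f e) x : ℤ) + inducedSum G f x = c * G.degree x := by
      exact_mod_cast hx
    have hy' : (inducedSum G (fun e => c - f e) y : ℤ) + inducedSum G f y = c * G.degree y := by
      exact_mod_cast hy
    have hg' : (inducedSum G (fun e => c - f e) x : ℤ) = inducedSum G (fun e => c - f e) y := by
      exact_mod_cast hg
    linear_combination hy' - hx' + hg'
  · intro hfxy
    rw [hdeg x y hfxy, hfxy] at hx
    exact Nat.add_right_cancel (hx.trans hy.symm)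

theorem colorCount_eq_of_inducedSum_eq_iff {g : Sym2 V → ℕ}
    (h : ∀ x y : V, inducedSum G g x = inducedSum G g y ↔ inducedSum G f x = inducedSum G f y) :
    colorCount G g = colorCount G f :=
  le_antisymm
    (card_image_le_card_image_of_eq_imp fun x _ y _ => (h x y).2)
    (card_image_le_card_image_of_eq_imp fun x _ y _ => (h x y).1)

end LocalAntimagic

open LocalAntimagic in
/-- if equal induced sums force equal degrees and
`(q+1)(deg x − deg y) ≠ f⁺(x) − f⁺(y)` whenever `f⁺(x) ≠ f⁺(y)`, then
`g = q + 1 − f` is local antimagic with the same number of induced labels. -/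
theorem stmt5 {V : Type*} [Fintype V] [DecidableEq V] (G : SimpleGraph V)
    [DecidableRel G.Adj] (f : Sym2 V → ℕ) (hf : IsLocalAntimagic G f)
    (h1 : ∀ x y : V, inducedSum G f x = inducedSum G f y → G.degree x = G.degree y)
    (h2 : ∀ x y : V, inducedSum G f x ≠ inducedSum G f y →
      ((G.edgeFinset.card : ℤ) + 1) * ((G.degree x : ℤ) - (G.degree y : ℤ)) ≠
        (inducedSum G f x : ℤ) - (inducedSum G f y : ℤ)) :
    IsLocalAntimagic G (fun e => G.edgeFinset.card + 1 - f e) ∧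
    colorCount G (fun e => G.edgeFinset.card + 1 - f e) = colorCount G f := by
  have hle : ∀ e ∈ G.edgeSet, f e ≤ G.edgeFinset.card + 1 :=
    fun e he => (hf.1.mapsTo he).2.trans (Nat.le_succ _)
  have hsum_iff := inducedSum_tsub_eq_iff hle h1 fun x y hxy => by
    push_cast
    exact h2 x y hxy
  refine ⟨⟨(Nat.bijOn_add_one_tsub_Icc _).comp hf.1, fun u v huv h => ?_⟩,
    colorCount_eq_of_inducedSum_eq_iff hsum_iff⟩
  exact hf.2 huv ((hsum_iff u v).1 h)
end

section
/- For m ≥ 3, the local antimagic chromatic number of the cycle C_m is 3. -/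
/-!
If only two vertex sums occurred, they would alternate around the cycle, so `m` would be even
(an odd cycle has no proper 2-colouring). For even `m`, writing the sum at `v` as
`g v + g (v + 1)`, the differences `g (v + 2) - g v` all equal the difference of the two sums,
and they telescope to zero over a full turn of the cycle; so the two sums coincide.

Three sums are attained by labelling the edges `s(v, v + 1)`, `v = 0, 1, 2, …`, in the zigzag
order `1, m, 2, m - 1, 3, …`: vertex `v ≠ 0` then gets `m + 2` or `m + 1` according to the parity
of `v`, and vertex `0` gets `m / 2 + 2`.
-/

open Finset

open Function

theorem periodic_two_of_alternating {G α : Type*} [AddMonoidWithOne G] {s : G → α} {a b : α}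
    (hs : ∀ x, s (x + 1) ≠ s x) (hab : ∀ x, s x = a ∨ s x = b) : Periodic s 2 := by
  intro x
  have h₁ := hs x
  have h₂ := hs (x + 1)
  rw [add_assoc, one_add_one_eq_two] at h₂
  rcases hab x with h | h <;> rcases hab (x + 1) with h' | h' <;>
    rcases hab (x + 2) with h'' | h'' <;> simp_all

namespace ZMod

variable {m : ℕ}

theorem periodic_one_of_periodic_two_of_odd {α : Type*} {s : ZMod m → α} (hm : Odd m)
    (h : Periodic s 2) : Periodic s 1 := by
  obtain ⟨t, rfl⟩ := hm
  have h_one : ((t + 1 : ℕ) : ZMod (2 * t + 1)) * 2 = 1 := by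
    have := natCast_self (2 * t + 1)
    push_cast at this ⊢
    linear_combination this
  simpa only [h_one] using h.nat_mul (t + 1)

theorem periodic_one_of_periodic_two_of_even [NeZero m] (hm : Even m) (g : ZMod m → ℤ)
    (h : Periodic (fun v ↦ g v + g (v + 1)) 2) : Periodic (fun v ↦ g v + g (v + 1)) 1 := by
  obtain ⟨t, rfl⟩ := hm
  intro x
  have step (k : ℕ) : g (x + (k + 1 : ℕ) * 2) - g (x + k * 2) = g (x + 2) - g x := by
    have e₀ := h.nat_mul k x
    have e₁ := h.nat_mul k (x + 1)
    push_cast at e₀ e₁ ⊢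
    ring_nf at e₀ e₁ ⊢
    linear_combination e₁ - e₀
  have h_period : ((t : ℕ) : ZMod (t + t)) * 2 = 0 := by
    have := natCast_self (t + t)
    push_cast at this ⊢
    linear_combination this
  have telescope := Finset.sum_range_sub (fun k : ℕ ↦ g (x + k * 2)) t
  simp only [step, Finset.sum_const, Finset.card_range, h_period, add_zero, Nat.cast_zero,
    zero_mul, sub_self, nsmul_eq_mul] at telescope
  have ht : (t : ℤ) ≠ 0 := by have := NeZero.ne (t + t); omega
  have hdiff := (mul_eq_zero.1 telescope).resolve_left ht
  show g (x + 1) + g (x + 1 + 1) = g x + g (x + 1)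
  rw [add_assoc, one_add_one_eq_two]
  linarith

theorem bijOn_val [NeZero m] : Set.BijOn (val : ZMod m → ℕ) Set.univ (Set.Iio m) :=
  ⟨fun v _ ↦ val_lt v, (val_injective m).injOn, fun _ hw ↦ ⟨_, trivial, val_cast_of_lt hw⟩⟩

end ZMod

namespace LocalAntimagic

section Cycle

variable {m : ℕ}

def cycleEdge (v : ZMod m) : Sym2 (ZMod m) := s(v, v + 1)

theorem cycleEdge_injective (hm : 3 ≤ m) : Injective (cycleEdge (m := m)) := by
  intro u v h
  rcases Sym2.eq_iff.1 h with ⟨h, -⟩ | ⟨rfl, h⟩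
  · exact h
  · have h₂ : ((2 : ℕ) : ZMod m) ≠ 0 := by
      rw [Ne, ZMod.natCast_eq_zero_iff]
      exact Nat.not_dvd_of_pos_of_lt two_pos (by omega)
    exact absurd (by push_cast; linear_combination h) h₂

variable [NeZero m]

theorem cycle_adj_iff (hm : 1 < m) {u v : ZMod m} :
    (cycle m).Adj u v ↔ v = u + 1 ∨ u = v + 1 := by
  have : Fact (1 < m) := ⟨hm⟩
  simp only [cycle, circulant, Finset.mem_singleton, sub_eq_iff_eq_add']
  constructor
  · rintro ⟨-, h | h⟩ <;> [right; left] <;> rw [h, add_comm]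
  · rintro (rfl | rfl) <;> refine ⟨by simp, by simp [add_comm]⟩

theorem cycle_edgeSet (hm : 1 < m) : (cycle m).edgeSet = Set.range cycleEdge := by
  ext e
  induction e with
  | h u v =>
    simp only [SimpleGraph.mem_edgeSet, cycle_adj_iff hm, Set.mem_range, cycleEdge]
    constructor
    · rintro (rfl | rfl)
      exacts [⟨u, rfl⟩, ⟨v, Sym2.eq_swap⟩]
    · rintro ⟨w, hw⟩
      rcases Sym2.eq_iff.1 hw with ⟨rfl, rfl⟩ | ⟨rfl, rfl⟩ <;> simp

theorem card_edgeFinset_cycle (hm : 3 ≤ m) : #(cycle m).edgeFinset = m := by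
  have : (cycle m).edgeFinset = univ.image cycleEdge := by
    apply Finset.coe_injective
    rw [SimpleGraph.coe_edgeFinset, coe_image, coe_univ, Set.image_univ, cycle_edgeSet (by omega)]
  rw [this, card_image_of_injective _ (cycleEdge_injective hm), card_univ, ZMod.card]

theorem cycle_incidenceFinset (hm : 3 ≤ m) (v : ZMod m) :
    (cycle m).incidenceFinset v = {cycleEdge (v - 1), cycleEdge v} := by
  ext e
  simp only [SimpleGraph.mem_incidenceFinset, SimpleGraph.incidenceSet, Set.mem_ofPred_eq,
    cycle_edgeSet (by omega : 1 < m), Set.mem_range, Finset.mem_insert, Finset.mem_singleton]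
  constructor
  · rintro ⟨⟨u, rfl⟩, hv⟩
    rcases Sym2.mem_iff.1 hv with rfl | rfl
    · exact Or.inr rfl
    · exact Or.inl (by simp)
  · rintro (rfl | rfl)
    · exact ⟨⟨_, rfl⟩, by simp [cycleEdge]⟩
    · exact ⟨⟨_, rfl⟩, by simp [cycleEdge]⟩

theorem inducedSum_cycle (hm : 3 ≤ m) (f : Sym2 (ZMod m) → ℕ) (v : ZMod m) :
    inducedSum (cycle m) f v = f (cycleEdge (v - 1)) + f (cycleEdge v) := by
  have : Fact (1 < m) := ⟨by omega⟩
  have hne : cycleEdge (v - 1) ≠ cycleEdge v := fun h ↦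
    one_ne_zero (sub_eq_self.1 (cycleEdge_injective hm h))
  rw [inducedSum, cycle_incidenceFinset hm, Finset.sum_pair hne]

theorem three_le_colorCount_cycle (hm : 3 ≤ m) {f : Sym2 (ZMod m) → ℕ}
    (hf : ∀ ⦃u v⦄, (cycle m).Adj u v →
      inducedSum (cycle m) f u ≠ inducedSum (cycle m) f v) :
    3 ≤ colorCount (cycle m) f := by
  set s := inducedSum (cycle m) f
  have hsucc (v : ZMod m) : s (v + 1) ≠ s v :=
    (hf ((cycle_adj_iff (by omega)).2 (Or.inl rfl))).symm
  by_contra! hlt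
  have htwo (v : ZMod m) : s v = s 0 ∨ s v = s 1 := by
    by_contra! hv
    have hne : s 0 ≠ s 1 := by simpa using (hsucc 0).symm
    have hmem (u : ZMod m) : s u ∈ univ.image s := mem_image_of_mem _ (mem_univ _)
    have : 2 < colorCount (cycle m) f :=
      two_lt_card.2 ⟨_, hmem v, _, hmem 0, _, hmem 1, hv.1, hv.2, hne⟩
    omega
  have h₁ : Periodic s 1 := by
    have h₂ := periodic_two_of_alternating hsucc htwo
    rcases Nat.even_or_odd m with hev | hodd
    · let g (v : ZMod m) : ℤ := f (cycleEdge (v - 1))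
      have hsg : (fun v ↦ g v + g (v + 1)) = Nat.cast ∘ s := by
        ext v
        simp [g, s, inducedSum_cycle hm]
      have := ZMod.periodic_one_of_periodic_two_of_even hev g (hsg ▸ h₂.comp Nat.cast)
      exact fun v ↦ Nat.cast_injective (R := ℤ) ((hsg ▸ this) v)
    · exact ZMod.periodic_one_of_periodic_two_of_odd hodd h₂
  exact hsucc 0 (h₁ 0)

end Cycle

def zigzag (m w : ℕ) : ℕ := if Even w then w / 2 + 1 else m - w / 2

def zigzagColor (m w : ℕ) : ℕ := if w = 0 then m / 2 + 2 else if Even w then m + 2 else m + 1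

theorem zigzag_bijOn (m : ℕ) : Set.BijOn (zigzag m) (Set.Iio m) (Set.Icc 1 m) := by
  refine ⟨fun w (hw : w < m) ↦ ?_, fun w₁ (hw₁ : w₁ < m) w₂ (hw₂ : w₂ < m) h ↦ ?_,
    fun n ⟨hn₁, hn₂⟩ ↦ ?_⟩
  · simp only [zigzag, Nat.even_iff, Set.mem_Icc]
    split_ifs <;> omega
  · simp only [zigzag, Nat.even_iff] at h
    split_ifs at h <;> omega
  · by_cases hn : 2 * (n - 1) < m
    · refine ⟨2 * (n - 1), hn, ?_⟩
      simp only [zigzag, Nat.even_iff]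
      split_ifs <;> omega
    · refine ⟨2 * (m - n) + 1, show _ < m by omega, ?_⟩
      simp only [zigzag, Nat.even_iff]
      split_ifs <;> omega

theorem zigzag_add_zigzag_succ {m w : ℕ} (hw : w + 1 < m) :
    zigzag m w + zigzag m (w + 1) = zigzagColor m (w + 1) := by
  simp only [zigzag, zigzagColor, Nat.even_iff, Nat.add_one_ne_zero, reduceIte]
  split_ifs <;> omega

theorem zigzag_pred_add_zigzag_zero {m : ℕ} (hm : 0 < m) :
    zigzag m (m - 1) + zigzag m 0 = zigzagColor m 0 := by
  simp only [zigzag, zigzagColor, Nat.even_iff]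
  split_ifs <;> omega

theorem zigzagColor_mod_succ_ne {m w : ℕ} (hm : 3 ≤ m) (hw : w < m) :
    zigzagColor m ((w + 1) % m) ≠ zigzagColor m w := by
  rcases (Nat.succ_le_of_lt hw).lt_or_eq with hlt | rfl
  · rw [Nat.mod_eq_of_lt hlt]
    simp only [zigzagColor, Nat.even_iff, Nat.add_one_ne_zero, reduceIte]
    split_ifs <;> omega
  · rw [Nat.mod_self]
    simp only [zigzagColor, Nat.even_iff]
    split_ifs <;> omega

section ZigzagLabeling

variable {m : ℕ} [NeZero m]

noncomputable def zigzagLabeling (m : ℕ) [NeZero m] : Sym2 (ZMod m) → ℕ :=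
  extend cycleEdge (fun v ↦ zigzag m v.val) 0

theorem zigzagLabeling_cycleEdge (hm : 3 ≤ m) (v : ZMod m) :
    zigzagLabeling m (cycleEdge v) = zigzag m v.val :=
  (cycleEdge_injective hm).extend_apply _ _ v

theorem inducedSum_zigzagLabeling (hm : 3 ≤ m) {w : ℕ} (hw : w < m) :
    inducedSum (cycle m) (zigzagLabeling m) w = zigzagColor m w := by
  rw [inducedSum_cycle hm, zigzagLabeling_cycleEdge hm, zigzagLabeling_cycleEdge hm,
    ZMod.val_cast_of_lt hw]
  rcases w with _ | w
  · have : ((0 : ℕ) : ZMod m) - 1 = ((m - 1 : ℕ) : ZMod m) := by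
      rw [Nat.cast_sub (by omega), ZMod.natCast_self, Nat.cast_zero, Nat.cast_one]
    rw [this, ZMod.val_cast_of_lt (by omega), zigzag_pred_add_zigzag_zero (by omega)]
  · rw [Nat.cast_succ, add_sub_cancel_right, ZMod.val_cast_of_lt (by omega),
      zigzag_add_zigzag_succ hw]

theorem isLocalAntimagic_zigzagLabeling (hm : 3 ≤ m) :
    IsLocalAntimagic (cycle m) (zigzagLabeling m) := by
  refine ⟨?_, ?_⟩
  · rw [card_edgeFinset_cycle hm, cycle_edgeSet (by omega), ← Set.image_univ,
      ← Set.bijOn_comp_iff (cycleEdge_injective hm).injOn,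
      show zigzagLabeling m ∘ cycleEdge = zigzag m ∘ ZMod.val from
        funext (zigzagLabeling_cycleEdge hm)]
    exact (zigzag_bijOn m).comp ZMod.bijOn_val
  · have hsucc (v : ZMod m) : inducedSum (cycle m) (zigzagLabeling m) (v + 1) ≠
        inducedSum (cycle m) (zigzagLabeling m) v := by
      obtain ⟨w, hw, rfl⟩ : ∃ w < m, (w : ZMod m) = v := ⟨v.val, v.val_lt, v.natCast_zmod_val⟩
      rw [← Nat.cast_succ, ← ZMod.natCast_mod,
        inducedSum_zigzagLabeling hm (Nat.mod_lt _ (by omega)), inducedSum_zigzagLabeling hm hw]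
      exact zigzagColor_mod_succ_ne hm hw
    intro u v huv
    rcases (cycle_adj_iff (by omega)).1 huv with rfl | rfl
    exacts [(hsucc u).symm, hsucc v]

theorem colorCount_zigzagLabeling_le (hm : 3 ≤ m) :
    colorCount (cycle m) (zigzagLabeling m) ≤ 3 := by
  have hsub : univ.image (inducedSum (cycle m) (zigzagLabeling m)) ⊆
      {m / 2 + 2, m + 2, m + 1} := by
    intro c hc
    obtain ⟨v, -, rfl⟩ := mem_image.1 hc
    obtain ⟨w, hw, rfl⟩ : ∃ w < m, (w : ZMod m) = v := ⟨v.val, v.val_lt, v.natCast_zmod_val⟩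
    rw [inducedSum_zigzagLabeling hm hw, zigzagColor]
    split_ifs <;> simp
  exact (card_le_card hsub).trans card_le_three

end ZigzagLabeling

end LocalAntimagic

open LocalAntimagic in
/-- `χ_la(C_m) = 3` for all `m ≥ 3`. -/
theorem stmt11 (m : ℕ) [NeZero m] (hm : 3 ≤ m) : chiLA (cycle m) = 3 := by
  refine le_antisymm ?_ (le_sInf ?_)
  · calc chiLA (cycle m) ≤ colorCount (cycle m) (zigzagLabeling m) :=
          sInf_le ⟨_, isLocalAntimagic_zigzagLabeling hm, rfl⟩
      _ ≤ 3 := mod_cast colorCount_zigzagLabeling_le hm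
  · rintro _ ⟨f, ⟨-, hf⟩, rfl⟩
    exact_mod_cast three_le_colorCount_cycle hm hf
end
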